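/- arXiv:1410.6213 — 3 statements merged into one kernel-verified Lean document; each statement's English description precedes it below -/
import Mathlib

section
/- Let A, B ∈ M_n(ℂ) be such that for every z ∈ ℂ^n and every λ, γ ∈ σ(A) with λ ≠ γ one has ‖(A − λI)z‖ = ‖(B − λI)z‖ and ‖(A − γI)z‖ = ‖(B − γI)z‖. Then for all z ∈ ℂ^n, 2 Re( conj(λ) z*(A−B)z ) = 2 Re( conj(γ) z*(A−B)z ), and consequently (conj(λ−γ))(A − B) is skew-Hermitian. -/
/-!
Expanding the square, `‖(M - μ)z‖² = ‖Mz‖² + |μ|²‖z‖² - 2 Re (conj μ · z*Mz)`, so the norm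
condition at `μ` says that `2 Re (conj μ · z*(A - B)z) = ‖Az‖² - ‖Bz‖²`, a quantity independent
of `μ`. Comparing `μ = λ` and `μ = γ` gives `Re (conj (λ - γ) · z*(A - B)z) = 0` for every `z`,
and by polarization a complex matrix whose quadratic form is purely imaginary is skew-Hermitian.
-/

open Matrix ComplexConjugate

theorem Complex.sum_normSq_sub_smul {ι : Type*} [Fintype ι] (v w : ι → ℂ) (μ : ℂ) :
    ∑ i, normSq ((v - μ • w) i) =
      ∑ i, normSq (v i) + normSq μ * ∑ i, normSq (w i) - 2 * (conj μ * (star w ⬝ᵥ v)).re := by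
  simp only [Pi.sub_apply, Pi.smul_apply, smul_eq_mul, normSq_sub, normSq_mul,
    Finset.sum_sub_distrib, Finset.sum_add_distrib, Finset.mul_sum, dotProduct, re_sum]
  congr 1
  refine Finset.sum_congr rfl fun i _ => ?_
  simp only [map_mul, Pi.star_apply, RCLike.star_def]
  ring_nf

namespace Matrix

variable {ι : Type*} [Fintype ι]

theorem sub_smul_one_mulVec [DecidableEq ι] (M : Matrix ι ι ℂ) (μ : ℂ) (z : ι → ℂ) :
    (M - μ • 1) *ᵥ z = M *ᵥ z - μ • z := by
  rw [sub_mulVec, smul_mulVec, one_mulVec]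

theorem two_mul_re_conj_mul_star_dotProduct_sub_mulVec_self [DecidableEq ι]
    (A B : Matrix ι ι ℂ) (μ : ℂ) (z : ι → ℂ)
    (h : ∑ i, Complex.normSq (((A - μ • 1) *ᵥ z) i) = ∑ i, Complex.normSq (((B - μ • 1) *ᵥ z) i)) :
    2 * (conj μ * (star z ⬝ᵥ (A - B) *ᵥ z)).re =
      ∑ i, Complex.normSq ((A *ᵥ z) i) - ∑ i, Complex.normSq ((B *ᵥ z) i) := by
  rw [sub_smul_one_mulVec, sub_smul_one_mulVec, Complex.sum_normSq_sub_smul,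
    Complex.sum_normSq_sub_smul] at h
  rw [sub_mulVec, dotProduct_sub, mul_sub, Complex.sub_re]
  linarith

theorem eq_zero_of_star_dotProduct_mulVec_self_eq_zero (N : Matrix ι ι ℂ)
    (h : ∀ z : ι → ℂ, star z ⬝ᵥ N *ᵥ z = 0) : N = 0 := by
  classical
  have hT : toLpLin 2 2 N = 0 := (inner_map_self_eq_zero (toLpLin 2 2 N)).1 fun x => by
    rw [toLpLin_apply, EuclideanSpace.inner_eq_star_dotProduct, dotProduct_comm, WithLp.ofLp_toLp,
      star_dotProduct, h, star_zero]
  exact (toLpLin 2 2).map_eq_zero_iff.1 hT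

theorem star_dotProduct_conjTranspose_mulVec_self (M : Matrix ι ι ℂ) (z : ι → ℂ) :
    star z ⬝ᵥ Mᴴ *ᵥ z = conj (star z ⬝ᵥ M *ᵥ z) := by
  rw [mulVec_conjTranspose, star_dotProduct_star, ← dotProduct_mulVec]
  rfl

theorem conjTranspose_eq_neg_of_re_star_dotProduct_mulVec_self_eq_zero (M : Matrix ι ι ℂ)
    (h : ∀ z : ι → ℂ, (star z ⬝ᵥ M *ᵥ z).re = 0) : Mᴴ = -M := by
  refine eq_neg_of_add_eq_zero_left (eq_zero_of_star_dotProduct_mulVec_self_eq_zero _ fun z => ?_)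
  rw [add_mulVec, dotProduct_add, star_dotProduct_conjTranspose_mulVec_self, add_comm,
    Complex.add_conj, h z, mul_zero, Complex.ofReal_zero]

end Matrix

open Matrix in
theorem skewHermitian_of_norm_conditions (n : ℕ) (A B : Matrix (Fin n) (Fin n) ℂ)
    (h : ∀ z : Fin n → ℂ, ∀ lam ∈ spectrum ℂ A, ∀ gam ∈ spectrum ℂ A, lam ≠ gam →
      Real.sqrt (∑ i, Complex.normSq (((A - lam • 1).mulVec z) i)) =
        Real.sqrt (∑ i, Complex.normSq (((B - lam • 1).mulVec z) i)) ∧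
      Real.sqrt (∑ i, Complex.normSq (((A - gam • 1).mulVec z) i)) =
        Real.sqrt (∑ i, Complex.normSq (((B - gam • 1).mulVec z) i))) :
    ∀ lam ∈ spectrum ℂ A, ∀ gam ∈ spectrum ℂ A, lam ≠ gam →
      (∀ z : Fin n → ℂ,
        2 * (starRingEnd ℂ lam * (dotProduct (star z) ((A - B).mulVec z))).re =
        2 * (starRingEnd ℂ gam * (dotProduct (star z) ((A - B).mulVec z))).re) ∧
      (starRingEnd ℂ (lam - gam) • (A - B))ᴴ = -(starRingEnd ℂ (lam - gam) • (A - B)) := by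
  intro lam hlam gam hgam hne
  have re_eq : ∀ z : Fin n → ℂ,
      2 * (conj lam * (star z ⬝ᵥ (A - B) *ᵥ z)).re =
        2 * (conj gam * (star z ⬝ᵥ (A - B) *ᵥ z)).re := fun z => by
    have sum_nonneg (v : Fin n → ℂ) : 0 ≤ ∑ i, Complex.normSq (v i) :=
      Finset.sum_nonneg fun i _ => Complex.normSq_nonneg (v i)
    obtain ⟨h_lam, h_gam⟩ := h z lam hlam gam hgam hne
    rw [Real.sqrt_inj (sum_nonneg _) (sum_nonneg _)] at h_lam h_gam
    rw [two_mul_re_conj_mul_star_dotProduct_sub_mulVec_self A B lam z h_lam,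
      two_mul_re_conj_mul_star_dotProduct_sub_mulVec_self A B gam z h_gam]
  refine ⟨re_eq, conjTranspose_eq_neg_of_re_star_dotProduct_mulVec_self_eq_zero _ fun z => ?_⟩
  rw [smul_mulVec, dotProduct_smul, smul_eq_mul, map_sub, sub_mul, Complex.sub_re]
  linarith [re_eq z]
end

section
/- Let f(λ, t) = λ^3 + p_2(t) λ^2 + p_1(t) λ + p_0(t) where p_0 and p_2 are even polynomial functions of the real variable t, and p_1(t) = q_1(t) + a t with q_1 even and a < 0. Suppose for each t ∈ ℝ, f(·, t) has three nonnegative real roots λ_1(t) ≥ λ_2(t) ≥ λ_3(t). If t_0 > 0 satisfies λ_3(t_0) = ε² (for a given ε > 0), then f(ε², −t_0) > 0, and consequently λ_3(−t_0) < ε². -/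
theorem cubic_root_flip (p0 p2 q1 : ℝ → ℝ) (a : ℝ) (ha : a < 0)
    (hp0 : ∀ t, p0 (-t) = p0 t) (hp2 : ∀ t, p2 (-t) = p2 t)
    (hq1 : ∀ t, q1 (-t) = q1 t)
    (f : ℝ → ℝ → ℝ)
    (hf : ∀ lam t, f lam t = lam ^ 3 + p2 t * lam ^ 2 + (q1 t + a * t) * lam + p0 t)
    (l1 l2 l3 : ℝ → ℝ)
    (hord : ∀ t, l3 t ≤ l2 t ∧ l2 t ≤ l1 t ∧ 0 ≤ l3 t)
    (hroots : ∀ t lam, f lam t = (lam - l1 t) * (lam - l2 t) * (lam - l3 t))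
    (ε t0 : ℝ) (hε : 0 < ε) (ht0 : 0 < t0)
    (hroot : l3 t0 = ε ^ 2) :
    0 < f (ε ^ 2) (-t0) ∧ l3 (-t0) < ε ^ 2 := by
  have h0 : f (ε ^ 2) t0 = 0 := by
    rw [hroots, hroot]; ring
  have hfe : f (ε ^ 2) (-t0) = f (ε ^ 2) t0 - 2 * a * t0 * ε ^ 2 := by
    rw [hf, hf, hp0, hp2, hq1]; ring
  have hpos : 0 < f (ε ^ 2) (-t0) := by
    rw [hfe, h0]
    nlinarith [sq_nonneg ε, mul_pos ht0 (mul_pos hε hε)]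
  refine ⟨hpos, ?_⟩
  by_contra h
  push_neg at h
  obtain ⟨h32, h21, _⟩ := hord (-t0)
  have heq := hroots (-t0) (ε ^ 2)
  have h1 : ε ^ 2 - l1 (-t0) ≤ 0 := by linarith
  have h2 : ε ^ 2 - l2 (-t0) ≤ 0 := by linarith
  have h3 : ε ^ 2 - l3 (-t0) ≤ 0 := by linarith
  have : (ε ^ 2 - l1 (-t0)) * (ε ^ 2 - l2 (-t0)) * (ε ^ 2 - l3 (-t0)) ≤ 0 :=
    mul_nonpos_of_nonneg_of_nonpos (mul_nonneg_of_nonpos_of_nonpos h1 h2) h3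
  linarith [hpos, heq ▸ this]
end

section
/- Let A ∈ M_n(ℂ) be normal with at most two distinct eigenvalues. Then for every B ∈ M_n(ℂ) and every ε > 0, σ_ε([A,B]) = −σ_ε([A,B]). -/
noncomputable def eNorm {n : ℕ} (v : Fin n → ℂ) : ℝ :=
  Real.sqrt (∑ i, Complex.normSq (v i))

noncomputable def sMin {n : ℕ} (M : Matrix (Fin n) (Fin n) ℂ) : ℝ :=
  sInf {r : ℝ | ∃ v : Fin n → ℂ, eNorm v = 1 ∧ r = eNorm (M.mulVec v)}

noncomputable def pseudoSpectrum {n : ℕ} (ε : ℝ) (A : Matrix (Fin n) (Fin n) ℂ) : Set ℂ :=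
  {z : ℂ | sMin (A - z • (1 : Matrix (Fin n) (Fin n) ℂ)) < ε}

/-!
Write the normal matrix as `A = ν + λ W` with `W` a self-adjoint involution: by the continuous
functional calculus, `W` is the image of `A` under the affine map sending the two admissible
eigenvalues to `±1`. Then `[A, B] = λ [W, B]` and `W [W, B] W = -[W, B]`, so `C = [A, B]` is
unitarily similar to `-C`. Hence `-W (C - z) W* = C + z`, and `s_min` is invariant under
multiplication by unitaries on either side.
-/

theorem IsStarNormal.exists_involution_of_spectrum_subset_pair {𝒜 : Type*} [CStarAlgebra 𝒜]
    {x : 𝒜} [IsStarNormal x] {a b : ℂ} (hab : a ≠ b) (hx : spectrum ℂ x ⊆ {a, b}) :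
    ∃ w : 𝒜, IsSelfAdjoint w ∧ w * w = 1 ∧
      x = algebraMap ℂ 𝒜 ((a + b) / 2) + ((a - b) / 2) • w := by
  obtain ⟨g, hg_def⟩ : ∃ g : ℂ → ℂ, ∀ z, g z = (2 * z - (a + b)) / (a - b) := ⟨_, fun _ => rfl⟩
  have hgc : Continuous g := by rw [show g = _ from funext hg_def]; fun_prop
  have hg : ∀ z ∈ spectrum ℂ x, g z = 1 ∨ g z = -1 := by
    intro z hz
    rcases hx hz with rfl | rfl
    · left; rw [hg_def]; field_simp; ring
    · right; rw [hg_def]; field_simp; ring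
  refine ⟨cfc g x, ?_, ?_, ?_⟩
  · rw [IsSelfAdjoint, ← cfc_star]
    refine cfc_congr fun z hz => ?_
    rcases hg z hz with h | h <;> simp [h]
  · rw [← cfc_mul g g, ← cfc_one ℂ x]
    refine cfc_congr fun z hz => ?_
    rcases hg z hz with h | h <;> simp [h]
  · rw [← cfc_const_mul _ g x, ← cfc_const_add _ _ x]
    nth_rw 1 [← cfc_id' ℂ x]
    congr 1
    funext z
    rw [hg_def]
    field_simp
    ring

theorem mul_commutator_mul_eq_neg {R 𝒜 : Type*} [CommRing R] [Ring 𝒜] [Algebra R 𝒜]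
    {w x : 𝒜} (hw : w * w = 1) {c d : R} (hx : x = algebraMap R 𝒜 c + d • w) (y : 𝒜) :
    w * (x * y - y * x) * w = -(x * y - y * x) := by
  have hcomm : x * y - y * x = d • (w * y - y * w) := by
    rw [hx, add_mul, mul_add, Algebra.commutes, smul_mul_assoc, mul_smul_comm, smul_sub]
    abel
  rw [hcomm, mul_smul_comm, smul_mul_assoc, ← smul_neg]
  congr 1
  calc w * (w * y - y * w) * w = (w * w) * y * w - w * y * (w * w) := by noncomm_ring
    _ = -(w * y - y * w) := by rw [hw, one_mul, mul_one, neg_sub]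

section UnitaryInvariance

open Matrix

variable {n : ℕ}

theorem eNorm_eq_norm_toLp (v : Fin n → ℂ) : eNorm v = ‖WithLp.toLp 2 v‖ := by
  simp [eNorm, EuclideanSpace.norm_eq, Complex.sq_norm]

theorem eNorm_mulVec_of_mem_unitary {U : Matrix (Fin n) (Fin n) ℂ}
    (hU : U ∈ unitary (Matrix (Fin n) (Fin n) ℂ)) (v : Fin n → ℂ) :
    eNorm (U *ᵥ v) = eNorm v := by
  rw [eNorm_eq_norm_toLp, eNorm_eq_norm_toLp, ← toEuclideanCLM_toLp]
  exact ContinuousLinearMap.norm_map_of_mem_unitary (Unitary.map_mem _ hU) _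

theorem sMin_mul_mul_of_mem_unitary {U V : Matrix (Fin n) (Fin n) ℂ}
    (hU : U ∈ unitary (Matrix (Fin n) (Fin n) ℂ)) (hV : V ∈ unitary (Matrix (Fin n) (Fin n) ℂ))
    (M : Matrix (Fin n) (Fin n) ℂ) : sMin (U * M * V) = sMin M := by
  unfold sMin
  congr 1
  ext r
  constructor
  · rintro ⟨v, hv, rfl⟩
    refine ⟨V *ᵥ v, by rw [eNorm_mulVec_of_mem_unitary hV, hv], ?_⟩
    rw [← mulVec_mulVec, ← mulVec_mulVec, eNorm_mulVec_of_mem_unitary hU]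
  · rintro ⟨v, hv, rfl⟩
    refine ⟨star V *ᵥ v, by rw [eNorm_mulVec_of_mem_unitary (Unitary.star_mem hV), hv], ?_⟩
    rw [mulVec_mulVec, mul_assoc _ V, Unitary.mul_star_self_of_mem hV, mul_one, ← mulVec_mulVec,
      eNorm_mulVec_of_mem_unitary hU]

theorem neg_pseudoSpectrum_of_conj_eq_neg {C W : Matrix (Fin n) (Fin n) ℂ}
    (hW : W ∈ unitary (Matrix (Fin n) (Fin n) ℂ)) (hC : W * C * star W = -C) (ε : ℝ) :
    -pseudoSpectrum ε C = pseudoSpectrum ε C := by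
  have hnegW : -W ∈ unitary (Matrix (Fin n) (Fin n) ℂ) :=
    Unitary.mem_iff.mpr (by simpa only [star_neg, neg_mul_neg] using Unitary.mem_iff.mp hW)
  ext z
  have hconj : -W * (C - z • 1) * star W = C - (-z) • 1 := by
    simp only [neg_mul, mul_sub, sub_mul, mul_smul_comm, smul_mul_assoc, mul_one, hC,
      Unitary.mul_star_self_of_mem hW]
    module
  simp only [Set.mem_neg, pseudoSpectrum, Set.mem_ofPred_eq]
  rw [← hconj, sMin_mul_mul_of_mem_unitary hnegW (Unitary.star_mem hW)]

end UnitaryInvariance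

open Matrix in
theorem pseudoSpectrum_commutator_symmetric (n : ℕ)
    (A : Matrix (Fin n) (Fin n) ℂ)
    (hnormal : A * Aᴴ = Aᴴ * A)
    (htwo : ∃ a b : ℂ, spectrum ℂ A ⊆ {a, b}) :
    ∀ B : Matrix (Fin n) (Fin n) ℂ, ∀ ε : ℝ, 0 < ε →
      pseudoSpectrum ε (A * B - B * A) = (fun z => -z) '' pseudoSpectrum ε (A * B - B * A) := by
  intro B ε _
  obtain ⟨a, b, hab, hspec⟩ : ∃ a b : ℂ, a ≠ b ∧ spectrum ℂ A ⊆ {a, b} := by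
    obtain ⟨a, b, h⟩ := htwo
    by_cases hab : a = b
    · subst hab
      exact ⟨a, a + 1, by simp, h.trans (by simp)⟩
    · exact ⟨a, b, hab, h⟩
  have : IsStarNormal A := ⟨hnormal.symm⟩
  obtain ⟨W, hWsa, hWW, hA⟩ := open scoped Matrix.Norms.L2Operator in
    IsStarNormal.exists_involution_of_spectrum_subset_pair hab hspec
  have hWu : W ∈ unitary (Matrix (Fin n) (Fin n) ℂ) := by
    rw [Unitary.mem_iff, hWsa.star_eq]
    exact ⟨hWW, hWW⟩
  rw [Set.image_neg_eq_neg, neg_pseudoSpectrum_of_conj_eq_neg hWu]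
  rw [hWsa.star_eq]
  exact mul_commutator_mul_eq_neg hWW hA B
end
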